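/- Let p ∈ ℝ^{d_A} and q ∈ ℝ^{d_B} be probability vectors (nonnegative entries summing to 1), and let G_1,…,G_m be pairwise disjoint sets whose union is {1,…,d_A}×{1,…,d_B}, such that each G_t contains at most one pair with any given first coordinate i. Then the vector r ∈ ℝ^m with entries r_t = Σ_{(i,j)∈G_t} p_i q_j is majorized by q. -/

import Mathlib

open Matrix
open scoped Kronecker ComplexOrder

noncomputable section

/-- Sum of the `k` largest entries of `v` (zero-padding implicit for nonneg vectors):
the maximum of `∑ i ∈ s, v i` over subsets `s` of cardinality at most `k`. -/
def topSum {ι : Type*} [Fintype ι] (v : ι → ℝ) (k : ℕ) : ℝ :=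
  (Finset.univ.powerset.filter fun s => s.card ≤ k).sup' ⟨∅, by simp⟩ fun s => ∑ i ∈ s, v i

/-- `v ≺ w` (majorization, with implicit zero padding): every partial sum of the `k` largest
entries of `v` is at most that of `w`, and the total sums are equal. -/
def Majorizes {ι κ : Type*} [Fintype ι] [Fintype κ] (v : ι → ℝ) (w : κ → ℝ) : Prop :=
  (∀ k : ℕ, topSum v k ≤ topSum w k) ∧ (∑ i, v i = ∑ j, w j)

/-- The operator norm (largest singular value) of a complex matrix. -/
def opNorm {m n : Type*} [Fintype m] [Fintype n] [DecidableEq n] (M : Matrix m n ℂ) : ℝ :=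
  ‖LinearMap.toContinuousLinearMap (Matrix.toEuclideanLin M)‖

/-- `sCoef U k = s_k`: the maximum operator norm over all submatrices of `U` of class `k`,
i.e. obtained by selecting nonempty row/column sets `R`, `C` with `|R| + |C| = k + 1`. -/
def sCoef {d : ℕ} (U : Matrix (Fin d) (Fin d) ℂ) (k : ℕ) : ℝ :=
  sSup { r : ℝ | ∃ R C : Finset (Fin d), R.Nonempty ∧ C.Nonempty ∧ R.card + C.card = k + 1 ∧
    r = opNorm (U.submatrix (fun i : {i // i ∈ R} => (i : Fin d))
                            (fun j : {j // j ∈ C} => (j : Fin d))) }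

/-- The bound vector `ω^{X⊕Z} = (1, s_1, s_2 - s_1, …, s_d - s_{d-1}, 0, …, 0) ∈ ℝ^{2d}`.
(Note `sCoef U 0 = sSup ∅ = 0`, so the entry at index `1` is `s_1`.) -/
def omegaDS {d : ℕ} (U : Matrix (Fin d) (Fin d) ℂ) : Fin (2 * d) → ℝ := fun i =>
  if (i : ℕ) = 0 then 1
  else if (i : ℕ) ≤ d then sCoef U (i : ℕ) - sCoef U ((i : ℕ) - 1)
  else 0

/-- A density matrix: positive semidefinite with unit trace. -/
def IsDensityMatrix {n : Type*} [Fintype n] (ρ : Matrix n n ℂ) : Prop :=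
  ρ.PosSemidef ∧ ρ.trace = 1

/-- A family of vectors forming an orthonormal basis of `ℂ^d` (w.r.t. `⟨u, v⟩ = star u ⬝ᵥ v`). -/
def OrthonormalBasisVecs {d : ℕ} (x : Fin d → Fin d → ℂ) : Prop :=
  ∀ i j, star (x i) ⬝ᵥ x j = if i = j then 1 else 0

/-- Measurement distribution of a density matrix `ρ` in the basis `x`: `p i = ⟨x i, ρ (x i)⟩`. -/
def measDist {d : ℕ} (x : Fin d → Fin d → ℂ) (ρ : Matrix (Fin d) (Fin d) ℂ) : Fin d → ℝ :=
  fun i => (star (x i) ⬝ᵥ (ρ *ᵥ x i)).re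

/-- The tensor product of vectors. -/
def tensorVec {dA dB : ℕ} (u : Fin dA → ℂ) (v : Fin dB → ℂ) : Fin dA × Fin dB → ℂ :=
  fun ab => u ab.1 * v ab.2

/-- Joint measurement distribution of a bipartite density matrix `ρ` in the product basis
`{xA i ⊗ xB j}`: `p (i,j) = ⟨xA i ⊗ xB j, ρ (xA i ⊗ xB j)⟩`. -/
def jointDist {dA dB : ℕ} (xA : Fin dA → Fin dA → ℂ) (xB : Fin dB → Fin dB → ℂ)
    (ρ : Matrix (Fin dA × Fin dB) (Fin dA × Fin dB) ℂ) : Fin dA × Fin dB → ℝ :=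
  fun ij => (star (tensorVec (xA ij.1) (xB ij.2)) ⬝ᵥ (ρ *ᵥ tensorVec (xA ij.1) (xB ij.2))).re

open scoped Classical in
/-- The finite set of distinct values of the products `α i * β j`. -/
def valueSet {dA dB : ℕ} (α : Fin dA → ℝ) (β : Fin dB → ℝ) : Finset ℝ :=
  Finset.image (fun ij : Fin dA × Fin dB => α ij.1 * β ij.2) Finset.univ

open scoped Classical in
/-- The grouped distribution of a joint distribution `p`, indexed by the distinct values `l`
of the products `α i * β j`, with entries `∑_{(i,j) : α i * β j = l} p (i,j)`. -/
def groupedDist {dA dB : ℕ} (α : Fin dA → ℝ) (β : Fin dB → ℝ)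
    (p : Fin dA × Fin dB → ℝ) : valueSet α β → ℝ :=
  fun l => ∑ ij ∈ Finset.univ.filter (fun ij : Fin dA × Fin dB => α ij.1 * β ij.2 = (l : ℝ)), p ij

/-- Separability: `ρ` is a finite convex combination of tensor products of density matrices. -/
def IsSeparableState {dA dB : ℕ} (ρ : Matrix (Fin dA × Fin dB) (Fin dA × Fin dB) ℂ) : Prop :=
  ∃ (K : ℕ) (lam : Fin K → ℝ) (σ : Fin K → Matrix (Fin dA) (Fin dA) ℂ)
    (τ : Fin K → Matrix (Fin dB) (Fin dB) ℂ),
    (∀ k, 0 ≤ lam k) ∧ (∑ k, lam k = 1) ∧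
    (∀ k, IsDensityMatrix (σ k)) ∧ (∀ k, IsDensityMatrix (τ k)) ∧
    ρ = ∑ k, (lam k : ℂ) • (σ k ⊗ₖ τ k)


/-! Fix `k` groups. Each group meets row `i` in at most one cell, so together they meet it in at
most `k` cells and collect at most `p i * topSum q k` from it; summing over the rows and using
`∑ i, p i = 1` bounds their total by `topSum q k`. -/

section Majorization

variable {α β ι : Type*}

def Finset.row (B : Finset (α × β)) (a : α) : Finset β :=
  B.preimage (Prod.mk a) (Prod.mk_right_injective a).injOn

@[simp]
theorem Finset.mem_row {B : Finset (α × β)} {a : α} {b : β} : b ∈ B.row a ↔ (a, b) ∈ B :=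
  Finset.mem_preimage

theorem card_row_biUnion_le [DecidableEq α] [DecidableEq β] (G : ι → Finset (α × β))
    (hfst : ∀ t, ∀ x ∈ G t, ∀ y ∈ G t, x.1 = y.1 → x = y) (S : Finset ι) (a : α) :
    ((S.biUnion G).row a).card ≤ S.card := by
  have hrow : (S.biUnion G).row a = S.biUnion fun t => (G t).row a := by
    ext b
    simp
  have hrow_le_one : ∀ t ∈ S, ((G t).row a).card ≤ 1 := fun t _ =>
    Finset.card_le_one.mpr fun b hb b' hb' =>
      (Prod.mk.inj (hfst t _ (Finset.mem_row.mp hb) _ (Finset.mem_row.mp hb') rfl)).2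
  rw [hrow]
  simpa using Finset.card_biUnion_le_card_mul S _ 1 hrow_le_one

variable [Fintype α] [Fintype β]

theorem sum_le_topSum (v : β → ℝ) {k : ℕ} {s : Finset β} (hs : s.card ≤ k) :
    ∑ j ∈ s, v j ≤ topSum v k :=
  Finset.le_sup' (fun t => ∑ j ∈ t, v j)
    (Finset.mem_filter.mpr ⟨Finset.mem_powerset.mpr (Finset.subset_univ s), hs⟩)

theorem topSum_le {v : β → ℝ} {k : ℕ} {c : ℝ} (h : ∀ s : Finset β, s.card ≤ k → ∑ j ∈ s, v j ≤ c) :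
    topSum v k ≤ c :=
  Finset.sup'_le _ _ fun s hs => h s (Finset.mem_filter.mp hs).2

theorem sum_mul_le_sum_mul_topSum {p : α → ℝ} (hp : ∀ a, 0 ≤ p a) (q : β → ℝ) {k : ℕ}
    (B : Finset (α × β)) (hrow : ∀ a, (B.row a).card ≤ k) :
    ∑ x ∈ B, p x.1 * q x.2 ≤ (∑ a, p a) * topSum q k := by
  rw [Finset.sum_finset_product B Finset.univ B.row (by simp), Finset.sum_mul]
  refine Finset.sum_le_sum fun a _ => ?_
  dsimp only
  rw [← Finset.mul_sum]
  exact mul_le_mul_of_nonneg_left (sum_le_topSum q (hrow a)) (hp a)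

end Majorization

theorem grouped_product_majorized_right_general {dA dB m : ℕ} (p : Fin dA → ℝ) (q : Fin dB → ℝ)
    (hp : ∀ i, 0 ≤ p i)
    (hps : ∑ i, p i = 1)
    (G : Fin m → Finset (Fin dA × Fin dB))
    (hdisj : ∀ s t, s ≠ t → Disjoint (G s) (G t))
    (hcover : ∀ ij : Fin dA × Fin dB, ∃ t, ij ∈ G t)
    (hfst : ∀ t, ∀ a ∈ G t, ∀ b ∈ G t, a.1 = b.1 → a = b) :
    Majorizes (fun t => ∑ ij ∈ G t, p ij.1 * q ij.2) q := by
  have hsum_biUnion : ∀ S : Finset (Fin m), ∑ t ∈ S, ∑ ij ∈ G t, p ij.1 * q ij.2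
      = ∑ ij ∈ S.biUnion G, p ij.1 * q ij.2 := fun S =>
    (Finset.sum_biUnion fun s _ t _ hst => hdisj s t hst).symm
  have hcover_univ : Finset.univ.biUnion G = Finset.univ :=
    Finset.eq_univ_of_forall fun ij => by simpa using hcover ij
  refine ⟨fun k => topSum_le fun S hS => ?_, ?_⟩
  · calc ∑ t ∈ S, ∑ ij ∈ G t, p ij.1 * q ij.2
        = ∑ ij ∈ S.biUnion G, p ij.1 * q ij.2 := hsum_biUnion S
      _ ≤ (∑ i, p i) * topSum q k := sum_mul_le_sum_mul_topSum hp q _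
          fun i => (card_row_biUnion_le G hfst S i).trans hS
      _ = topSum q k := by rw [hps, one_mul]
  · rw [hsum_biUnion, hcover_univ, Fintype.sum_prod_type]
    simp only [← Fintype.sum_mul_sum, hps, one_mul]

/-- grouping the product distribution `(p_i q_j)` along pairwise disjoint groups
covering all pairs, each containing at most one pair with any given first coordinate, yields a
vector majorized by `q`. -/
theorem grouped_product_majorized_right {dA dB m : ℕ} (p : Fin dA → ℝ) (q : Fin dB → ℝ)
    (hp : ∀ i, 0 ≤ p i) (hq : ∀ j, 0 ≤ q j)
    (hps : ∑ i, p i = 1) (hqs : ∑ j, q j = 1)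
    (G : Fin m → Finset (Fin dA × Fin dB))
    (hdisj : ∀ s t, s ≠ t → Disjoint (G s) (G t))
    (hcover : ∀ ij : Fin dA × Fin dB, ∃ t, ij ∈ G t)
    (hfst : ∀ t, ∀ a ∈ G t, ∀ b ∈ G t, a.1 = b.1 → a = b) :
    Majorizes (fun t => ∑ ij ∈ G t, p ij.1 * q ij.2) q :=
  grouped_product_majorized_right_general p q hp hps G hdisj hcover hfst

end
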